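/- Assume additionally that w is differentiable and that Bᵀ·diag(α)^{-1}·∇w(s) ≤ c (entrywise) for every s ≥ 0. Let (s_R, p_R, z_R) be a feasible point of problem (P_R1) attaining its optimal value, and let p̃ := (diag(z_R) − B)^{-1}λ and s̃ := s_R + diag(α)^{-1}·B·(p_R − p̃). Then the relaxation is exact: f(s̃, p̃) = f(s_R, p_R) = f*, so (s̃, p̃) is an optimal point of problem (P) and the optimal value of (P_R1) equals the optimal value of (P). -/

import Mathlib

noncomputable section

open Matrix

/-- Irreducibility of a nonnegative matrix. -/
def MatIrred {N : ℕ} (B : Matrix (Fin N) (Fin N) ℝ) : Prop :=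
  ∀ i j, ∃ k : ℕ, 1 ≤ k ∧ 0 < (B ^ k) i j

/-- The map `g(s,p)` with `g_i(s,p) = (1 - p_i)(λ_i + (Bp)_i) - (α_i s_i + δ_i) p_i`. -/
def gfun {N : ℕ} (B : Matrix (Fin N) (Fin N) ℝ) (lam δ α s p : Fin N → ℝ) : Fin N → ℝ :=
  fun i => (1 - p i) * (lam i + B.mulVec p i) - (α i * s i + δ i) * p i

/-- The objective `f(s,p) = w(s) + cᵀp`. -/
def fobj {N : ℕ} (w : (Fin N → ℝ) → ℝ) (c : Fin N → ℝ) (s p : Fin N → ℝ) : ℝ :=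
  w s + ∑ i, c i * p i

/-- Feasibility for the original problem (P). -/
def FeasP {N : ℕ} (B : Matrix (Fin N) (Fin N) ℝ) (lam δ α : Fin N → ℝ)
    (s p : Fin N → ℝ) : Prop :=
  (∀ i, 0 ≤ s i) ∧ (∀ i, 0 ≤ p i) ∧ gfun B lam δ α s p = 0

/-- The set `Ω` of nonnegative `z` such that `diag(z) - B` has all eigenvalues with
positive real part. -/
def OmegaSet {N : ℕ} (B : Matrix (Fin N) (Fin N) ℝ) : Set (Fin N → ℝ) :=
  {z | (∀ i, 0 ≤ z i) ∧
    ∀ μ ∈ spectrum ℂ ((Matrix.diagonal z - B).map Complex.ofReal), 0 < μ.re}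

/-- Feasibility for the convex relaxation (P_R1). -/
def FeasPR1 {N : ℕ} (B : Matrix (Fin N) (Fin N) ℝ) (lam δ α : Fin N → ℝ)
    (s p z : Fin N → ℝ) : Prop :=
  (∀ i, 0 ≤ s i) ∧ (∀ i, p i ≤ 1) ∧ z ∈ OmegaSet B ∧
  (∀ i, (Matrix.diagonal z - B)⁻¹.mulVec lam i ≤ p i) ∧
  (∀ i, z i = α i * s i + δ i + lam i + B.mulVec p i)

/-!
Moving the excess `p_R - p̃ ≥ 0` of the relaxed optimum into `s` keeps `z_R` fixed, so
`(s̃, p̃, z_R)` is again feasible for (P_R1); by convexity of `w` and the gradient condition it does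
not increase the objective, hence it is optimal as well, and `(s̃, p̃)` solves `g = 0`. Conversely a
feasible point of (P) lifts to (P_R1) with `z = α ∘ s + δ + λ + B p`, which lies in `Ω` by a
max-ratio estimate on eigenvectors, propagated along the graph of the irreducible matrix `B`.

Nonnegativity of `p̃ = (diag z - B)⁻¹ λ` follows by continuation along `diag (z + t) - B`: the
solution is nonnegative for large `t`, could only leave the nonnegative orthant through a zero
entry, and a nonnegative solution is strictly positive by irreducibility.
-/

open Finset

section Irreducible

variable {N : ℕ} {B : Matrix (Fin N) (Fin N) ℝ}

theorem MatIrred.forall_of_closed_under_pos (hBnn : ∀ i j, 0 ≤ B i j) (hB : MatIrred B)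
    {T : Fin N → Prop} (hT : ∀ i j, T i → 0 < B i j → T j) {i₀ : Fin N} (h₀ : T i₀) (j : Fin N) :
    T j := by
  let := toQuiver B
  obtain ⟨k, -, hk⟩ := hB i₀ j
  obtain ⟨⟨path, -⟩⟩ := (pow_apply_pos_iff_nonempty_path hBnn k i₀ j).mp hk
  clear hk
  induction path with
  | nil => exact h₀
  | cons _ e ih => exact hT _ _ ih e.down

theorem eq_of_le_of_sum_mul_le {ι : Type*} [Fintype ι] {a x y : ι → ℝ} (ha : ∀ j, 0 ≤ a j)
    (hxy : ∀ j, x j ≤ y j) (hsum : ∑ j, a j * y j ≤ ∑ j, a j * x j) {j : ι} (hj : 0 < a j) :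
    x j = y j := by
  by_contra hne
  have hlt : ∑ j, a j * x j < ∑ j, a j * y j :=
    sum_lt_sum (fun k _ => mul_le_mul_of_nonneg_left (hxy k) (ha k))
      ⟨j, mem_univ j, mul_lt_mul_of_pos_left (lt_of_le_of_ne (hxy j) hne) hj⟩
  linarith

theorem mulVec_apply_nonneg {p : Fin N → ℝ} (hBnn : ∀ i j, 0 ≤ B i j) (hp : ∀ i, 0 ≤ p i)
    (i : Fin N) : 0 ≤ (B *ᵥ p) i := by
  simp only [mulVec, dotProduct]
  exact sum_nonneg fun j _ => mul_nonneg (hBnn i j) (hp j)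

theorem diagonal_sub_mulVec_apply (z p : Fin N → ℝ) (i : Fin N) :
    ((diagonal z - B) *ᵥ p) i = z i * p i - ∑ j, B i j * p j := by
  rw [sub_mulVec, Pi.sub_apply, mulVec_diagonal]
  rfl

variable {lam z p : Fin N → ℝ}

theorem pos_of_diagonal_sub_mulVec_eq (hBnn : ∀ i j, 0 ≤ B i j) (hB : MatIrred B)
    (hlam : ∀ i, 0 ≤ lam i) (hlam0 : lam ≠ 0) (hp : ∀ i, 0 ≤ p i)
    (hzp : (diagonal z - B) *ᵥ p = lam) (i : Fin N) : 0 < p i := by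
  have hzero : ∀ i, p i = 0 → lam i = 0 ∧ ∀ j, 0 < B i j → p j = 0 := by
    intro i hpi
    have h := diagonal_sub_mulVec_apply (B := B) z p i
    rw [hzp, hpi, mul_zero, zero_sub] at h
    have hBp : 0 ≤ ∑ j, B i j * p j := sum_nonneg fun j _ => mul_nonneg (hBnn i j) (hp j)
    refine ⟨by linarith [hlam i], fun j hj => ?_⟩
    refine (eq_of_le_of_sum_mul_le (hBnn i) (x := 0) hp ?_ hj).symm
    simp only [Pi.zero_apply, mul_zero, sum_const_zero]
    linarith [hlam i]
  by_contra! hpi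
  have hzero_all := hB.forall_of_closed_under_pos hBnn (T := fun i => p i = 0)
    (fun i j hi hij => (hzero i hi).2 j hij) (le_antisymm hpi (hp i))
  exact hlam0 (funext fun j => (hzero j (hzero_all j)).1)

end Irreducible

section Spectrum

variable {N : ℕ} {B : Matrix (Fin N) (Fin N) ℝ} {lam z p : Fin N → ℝ}

theorem exists_mulVec_eq_smul_of_mem_spectrum {M : Matrix (Fin N) (Fin N) ℂ} {μ : ℂ}
    (hμ : μ ∈ spectrum ℂ M) : ∃ v : Fin N → ℂ, v ≠ 0 ∧ M *ᵥ v = μ • v := by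
  rw [← spectrum_toLin', ← Module.End.hasEigenvalue_iff_mem_spectrum] at hμ
  obtain ⟨v, hv, hv0⟩ := hμ.exists_hasEigenvector
  exact ⟨v, hv0, by simpa using Module.End.mem_eigenspace_iff.mp hv⟩

theorem re_pos_of_mem_spectrum (hBnn : ∀ i j, 0 ≤ B i j) (hB : MatIrred B)
    (hlam : ∀ i, 0 ≤ lam i) (hlam0 : lam ≠ 0) (hp : ∀ i, 0 < p i)
    (hzp : (diagonal z - B) *ᵥ p = lam) {μ : ℂ}
    (hμ : μ ∈ spectrum ℂ ((diagonal z - B).map Complex.ofReal)) : 0 < μ.re := by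
  obtain ⟨v, hv0, hv⟩ := exists_mulVec_eq_smul_of_mem_spectrum hμ
  have heig : ∀ a, ((z a : ℂ) - μ) * v a = ∑ j, (B a j : ℂ) * v j := by
    intro a
    have h := congrFun hv a
    simp [mulVec, dotProduct, diagonal_apply, sub_mul, sum_sub_distrib,
      apply_ite Complex.ofReal, ite_mul] at h
    linear_combination h
  by_contra! hre
  obtain ⟨j₀, hj₀⟩ := Function.ne_iff.mp hv0
  obtain ⟨i, -, hmax⟩ := exists_max_image univ (fun j => ‖v j‖ / p j) ⟨j₀, mem_univ j₀⟩
  set r := ‖v i‖ / p i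
  have hle : ∀ j, ‖v j‖ ≤ r * p j := fun j => (div_le_iff₀ (hp j)).mp (hmax j (mem_univ j))
  have hr : 0 < r := by
    by_contra! hr
    have : ‖v j₀‖ ≤ 0 := (hle j₀).trans (mul_nonpos_of_nonpos_of_nonneg hr (hp j₀).le)
    exact hj₀ (norm_le_zero_iff.mp this)
  -- Where `|v| / p` is maximal, `Re μ ≤ 0` turns every estimate into an equality.
  have hmaximal : ∀ a, ‖v a‖ = r * p a → lam a = 0 ∧ ∀ b, 0 < B a b → ‖v b‖ = r * p b := by
    intro a ha
    have hza : z a ≤ ‖(z a : ℂ) - μ‖ := by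
      have := Complex.re_le_norm ((z a : ℂ) - μ)
      rw [Complex.sub_re, Complex.ofReal_re] at this
      linarith
    have hrow : ∑ j, B a j * (r * p j) = r * (z a * p a - lam a) := by
      rw [← hzp, diagonal_sub_mulVec_apply, sub_sub_cancel, mul_sum]
      exact sum_congr rfl fun j _ => by ring
    have hchain : z a * (r * p a) ≤ ∑ j, B a j * ‖v j‖ := calc
      z a * (r * p a) ≤ ‖(z a : ℂ) - μ‖ * ‖v a‖ := by
        rw [ha]; exact mul_le_mul_of_nonneg_right hza (by positivity [hp a])
      _ = ‖∑ j, (B a j : ℂ) * v j‖ := by rw [← norm_mul, heig]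
      _ ≤ ∑ j, B a j * ‖v j‖ := (norm_sum_le _ _).trans (sum_le_sum fun j _ => by
        rw [norm_mul, Complex.norm_real, Real.norm_of_nonneg (hBnn a j)])
    have hsum : ∑ j, B a j * ‖v j‖ ≤ ∑ j, B a j * (r * p j) :=
      sum_le_sum fun j _ => mul_le_mul_of_nonneg_left (hle j) (hBnn a j)
    have hlam_a : lam a = 0 := by nlinarith [hlam a]
    refine ⟨hlam_a, fun b hb => eq_of_le_of_sum_mul_le (hBnn a) hle ?_ hb⟩
    rw [hrow, hlam_a]
    linarith
  have hi : ‖v i‖ = r * p i := (div_mul_cancel₀ _ (hp i).ne').symm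
  have hall := hB.forall_of_closed_under_pos hBnn (fun a b ha hab => (hmaximal a ha).2 b hab) hi
  exact hlam0 (funext fun a => (hmaximal a (hall a)).1)

end Spectrum

section Omega

variable {N : ℕ} {B : Matrix (Fin N) (Fin N) ℝ} {lam z : Fin N → ℝ}

theorem isUnit_det_diagonal_add_sub (hz : z ∈ OmegaSet B) {t : ℝ} (ht : 0 ≤ t) :
    IsUnit (diagonal (fun i => z i + t) - B).det := by
  have hnot : (-t : ℂ) ∉ spectrum ℂ ((diagonal z - B).map Complex.ofReal) := fun h => by
    have := hz.2 _ h
    simp only [Complex.neg_re, Complex.ofReal_re] at this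
    linarith
  have heq : algebraMap ℂ _ (-(t : ℂ)) - (diagonal z - B).map Complex.ofReal =
      Complex.ofRealHom.mapMatrix (-(diagonal (fun i => z i + t) - B)) := by
    ext i j
    by_cases hij : i = j <;> simp [hij, algebraMap_matrix_apply]; ring
  rw [spectrum.notMem_iff, heq, isUnit_iff_isUnit_det, ← RingHom.map_det, det_neg] at hnot
  simpa using hnot

theorem isUnit_det_diagonal_sub (hz : z ∈ OmegaSet B) : IsUnit (diagonal z - B).det := by
  simpa using isUnit_det_diagonal_add_sub hz le_rfl

end Omega

section Inverse

variable {N : ℕ} {B : Matrix (Fin N) (Fin N) ℝ} {lam z q : Fin N → ℝ}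

theorem nonneg_of_diagonal_sub_mulVec_eq (hBnn : ∀ i j, 0 ≤ B i j) (hdom : ∀ a, ∑ j, B a j < z a)
    (hlam : ∀ i, 0 ≤ lam i) (hq : (diagonal z - B) *ᵥ q = lam) (i : Fin N) : 0 ≤ q i := by
  obtain ⟨a, -, hmin⟩ := exists_min_image univ q ⟨i, mem_univ i⟩
  by_contra! hi
  have hqa : q a < 0 := (hmin i (mem_univ i)).trans_lt hi
  have hrow := diagonal_sub_mulVec_apply (B := B) z q a
  rw [hq] at hrow
  have hBq : q a * ∑ j, B a j ≤ ∑ j, B a j * q j := by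
    rw [mul_sum]
    exact sum_le_sum fun j _ => by nlinarith [hmin j (mem_univ j), hBnn a j]
  nlinarith [hdom a, hlam a]

theorem continuousOn_inv_diagonal_add_sub_mulVec_apply (hz : z ∈ OmegaSet B) (j : Fin N) :
    ContinuousOn (fun t => ((diagonal (fun i => z i + t) - B)⁻¹ *ᵥ lam) j) (Set.Ici 0) := by
  intro t ht
  set A : ℝ → Matrix (Fin N) (Fin N) ℝ := fun t => diagonal (fun i => z i + t) - B
  have hA : Continuous A := by fun_prop
  have hinv : ContinuousAt Ring.inverse (A t).det := by
    rw [Ring.inverse_eq_inv']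
    exact continuousAt_inv₀ (isUnit_det_diagonal_add_sub hz ht).ne_zero
  have hev : Continuous fun M : Matrix (Fin N) (Fin N) ℝ => (M *ᵥ lam) j :=
    (continuous_apply j).comp (continuous_id.matrix_mulVec continuous_const)
  exact (hev.continuousAt.comp ((continuousAt_matrix_inv _ hinv).comp
    hA.continuousAt)).continuousWithinAt

theorem inv_mulVec_nonneg_of_mem_OmegaSet (hBnn : ∀ i j, 0 ≤ B i j) (hB : MatIrred B)
    (hlam : ∀ i, 0 ≤ lam i) (hlam0 : lam ≠ 0) (hz : z ∈ OmegaSet B) (i : Fin N) :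
    0 ≤ ((diagonal z - B)⁻¹ *ᵥ lam) i := by
  have hne : (univ : Finset (Fin N)).Nonempty := ⟨i, mem_univ i⟩
  set A : ℝ → Matrix (Fin N) (Fin N) ℝ := fun t => diagonal (fun i => z i + t) - B
  set q : ℝ → Fin N → ℝ := fun t => (A t)⁻¹ *ᵥ lam
  have hAq : ∀ t, 0 ≤ t → A t *ᵥ q t = lam := fun t ht => by
    rw [mulVec_mulVec, mul_nonsing_inv _ (isUnit_det_diagonal_add_sub hz ht), one_mulVec]
  have hcont : ∀ j, ContinuousOn (fun t => q t j) (Set.Ici 0) :=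
    continuousOn_inv_diagonal_add_sub_mulVec_apply hz
  -- At `t = T` the matrix `diag (z + t) - B` is strictly diagonally dominant.
  set T : ℝ := 1 + ∑ a, ∑ j, B a j
  have hT : 0 ≤ T := by
    have := sum_nonneg fun a (_ : a ∈ univ) => sum_nonneg fun j (_ : j ∈ univ) => hBnn a j
    linarith
  have hqT : ∀ j, 0 ≤ q T j := by
    refine nonneg_of_diagonal_sub_mulVec_eq hBnn (fun a => ?_) hlam (hAq T hT)
    have hrow := single_le_sum (f := fun a => ∑ j, B a j)
      (fun a _ => sum_nonneg fun j _ => hBnn a j) (mem_univ a)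
    linarith [hz.1 a]
  -- The minimal entry of `q t` is continuous in `t`, and it cannot vanish: a nonnegative
  -- solution is strictly positive.
  set m : ℝ → ℝ := fun t => univ.inf' hne fun j => q t j
  by_contra! hneg
  have hm0 : m 0 < 0 := (inf'_le _ (mem_univ i)).trans_lt (by simpa [q, A] using hneg)
  obtain ⟨t, ht, hmt⟩ := intermediate_value_Icc hT
    (ContinuousOn.finset_inf'_apply hne fun j _ => (hcont j).mono Set.Icc_subset_Ici_self)
    ⟨hm0.le, le_inf' _ _ fun j _ => hqT j⟩
  obtain ⟨j, -, hj⟩ := exists_mem_eq_inf' hne fun j => q t j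
  have hqt : ∀ k, 0 ≤ q t k := fun k => hmt ▸ inf'_le _ (mem_univ k)
  have := pos_of_diagonal_sub_mulVec_eq hBnn hB hlam hlam0 hqt (hAq t ht.1) j
  linarith

end Inverse

theorem ConvexOn.fderiv_sub_le_sub {E : Type*} [NormedAddCommGroup E] [NormedSpace ℝ E]
    {w : E → ℝ} (hw : ConvexOn ℝ Set.univ w) {x : E} (hx : DifferentiableAt ℝ w x) (y : E) :
    fderiv ℝ w x (y - x) ≤ w y - w x := by
  have hφ : ConvexOn ℝ Set.univ (w ∘ AffineMap.lineMap (k := ℝ) x y) := by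
    simpa using hw.comp_affineMap (AffineMap.lineMap x y : ℝ →ᵃ[ℝ] E)
  have hφ' : HasDerivAt (w ∘ AffineMap.lineMap (k := ℝ) x y) (fderiv ℝ w x (y - x)) 0 :=
    hx.hasFDerivAt.comp_hasDerivAt_of_eq 0 AffineMap.hasDerivAt_lineMap
      (AffineMap.lineMap_apply_zero x y).symm
  simpa [slope_def_field] using
    hφ.le_slope_of_hasDerivAt (Set.mem_univ 0) (Set.mem_univ 1) one_pos hφ'

theorem ContinuousLinearMap.apply_eq_sum_mul_single {ι : Type*} [Fintype ι] [DecidableEq ι]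
    (D : (ι → ℝ) →L[ℝ] ℝ) (v : ι → ℝ) : D v = ∑ j, v j * D (Pi.single j 1) := by
  conv_lhs => rw [pi_eq_sum_univ' v]
  simp [map_sum, map_smul]

section Problem

variable {N : ℕ} {B : Matrix (Fin N) (Fin N) ℝ} {lam δ α c s p s' p' z : Fin N → ℝ}

theorem fobj_le_fobj_of_eq_add {w : (Fin N → ℝ) → ℝ} (hw : ConvexOn ℝ Set.univ w)
    (hwd : DifferentiableAt ℝ w s')
    (hgrad : ∀ i, ∑ j, B j i * (α j)⁻¹ * fderiv ℝ w s' (Pi.single j 1) ≤ c i)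
    (hp : ∀ i, p' i ≤ p i) (hs : s' = fun i => s i + (α i)⁻¹ * (B *ᵥ fun j => p j - p' j) i) :
    fobj w c s' p' ≤ fobj w c s p := by
  set D := fderiv ℝ w s'
  have hD : D (s' - s) ≤ ∑ i, c i * (p i - p' i) := calc
    D (s' - s) = ∑ j, (s' - s) j * D (Pi.single j 1) := D.apply_eq_sum_mul_single _
    _ = ∑ i, (p i - p' i) * ∑ j, B j i * (α j)⁻¹ * D (Pi.single j 1) := by
      simp only [hs, Pi.sub_apply, add_sub_cancel_left, mulVec, dotProduct, mul_sum, sum_mul]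
      rw [sum_comm]
      exact sum_congr rfl fun i _ => sum_congr rfl fun j _ => by ring
    _ ≤ ∑ i, c i * (p i - p' i) :=
      sum_le_sum fun i _ => by nlinarith [hgrad i, hp i]
  have hconv := hw.fderiv_sub_le_sub hwd s
  rw [← neg_sub, map_neg] at hconv
  have hsplit : ∑ i, c i * (p i - p' i) = ∑ i, c i * p i - ∑ i, c i * p' i := by
    rw [← sum_sub_distrib]
    exact sum_congr rfl fun i _ => by ring
  unfold fobj
  linarith

def zPoint (B : Matrix (Fin N) (Fin N) ℝ) (lam δ α s p : Fin N → ℝ) : Fin N → ℝ :=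
  fun i => α i * s i + δ i + lam i + (B *ᵥ p) i

theorem gfun_eq_zero_iff :
    gfun B lam δ α s p = 0 ↔ (diagonal (zPoint B lam δ α s p) - B) *ᵥ p = lam := by
  rw [funext_iff, funext_iff]
  refine forall_congr' fun i => ?_
  rw [diagonal_sub_mulVec_apply]
  simp only [gfun, zPoint, Pi.zero_apply, mulVec, dotProduct]
  constructor <;> intro h <;> linarith

theorem FeasP.lt_one (h : FeasP B lam δ α s p) (hBnn : ∀ i j, 0 ≤ B i j)
    (hlam : ∀ i, 0 ≤ lam i) (hδ : ∀ i, 0 < δ i) (hα : ∀ i, 0 < α i) (i : Fin N) : p i < 1 := by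
  obtain ⟨hs, hp, hg⟩ := h
  have hgi := congrFun hg i
  simp only [gfun, Pi.zero_apply] at hgi
  have hBp := mulVec_apply_nonneg hBnn hp i
  by_contra! h1
  nlinarith [mul_nonneg (hα i).le (hs i), hδ i, hlam i]

theorem FeasP.feasPR1 (h : FeasP B lam δ α s p) (hBnn : ∀ i j, 0 ≤ B i j) (hB : MatIrred B)
    (hlam : ∀ i, 0 ≤ lam i) (hlam0 : lam ≠ 0) (hδ : ∀ i, 0 < δ i) (hα : ∀ i, 0 < α i) :
    FeasPR1 B lam δ α s p (zPoint B lam δ α s p) := by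
  have hp1 := h.lt_one hBnn hlam hδ hα
  obtain ⟨hs, hp, hg⟩ := h
  rw [gfun_eq_zero_iff] at hg
  set z := zPoint B lam δ α s p with hz
  have hz0 : ∀ i, 0 ≤ z i := fun i => by
    have := mul_nonneg (hα i).le (hs i)
    simp only [hz, zPoint]
    linarith [hδ i, hlam i, mulVec_apply_nonneg hBnn hp i]
  have hΩ : z ∈ OmegaSet B := ⟨hz0, fun μ hμ => re_pos_of_mem_spectrum hBnn hB
    hlam hlam0 (pos_of_diagonal_sub_mulVec_eq hBnn hB hlam hlam0 hp hg) hg hμ⟩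
  have hinv : p = (diagonal z - B)⁻¹ *ᵥ lam := by
    rw [← hg, mulVec_mulVec, nonsing_inv_mul _ (isUnit_det_diagonal_sub hΩ), one_mulVec]
  exact ⟨hs, fun i => (hp1 i).le, hΩ, fun i => (congrFun hinv i).ge, fun i => rfl⟩

theorem FeasPR1.eq_zPoint_shift (h : FeasPR1 B lam δ α s p z) (hα : ∀ i, 0 < α i)
    (hs' : s' = fun i => s i + (α i)⁻¹ * (B *ᵥ fun j => p j - p' j) i) :
    z = zPoint B lam δ α s' p' := by
  funext i
  have hBp : (B *ᵥ fun j => p j - p' j) i = (B *ᵥ p) i - (B *ᵥ p') i := by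
    simp only [mulVec, dotProduct, mul_sub, sum_sub_distrib]
  rw [h.2.2.2.2 i, hs', zPoint, hBp, mul_add, mul_inv_cancel_left₀ (hα i).ne']
  ring

theorem FeasPR1.shift (h : FeasPR1 B lam δ α s p z) (hBnn : ∀ i j, 0 ≤ B i j)
    (hB : MatIrred B) (hlam : ∀ i, 0 ≤ lam i) (hlam0 : lam ≠ 0) (hα : ∀ i, 0 < α i)
    (hp' : p' = (diagonal z - B)⁻¹ *ᵥ lam)
    (hs' : s' = fun i => s i + (α i)⁻¹ * (B *ᵥ fun j => p j - p' j) i) :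
    FeasPR1 B lam δ α s' p' z ∧ FeasP B lam δ α s' p' := by
  have hzs' := h.eq_zPoint_shift hα hs'
  obtain ⟨hs, hp1, hz, hpz, -⟩ := h
  have hp'p : ∀ i, p' i ≤ p i := hp' ▸ hpz
  have hs'0 : ∀ i, 0 ≤ s' i := fun i => by
    rw [hs']
    exact add_nonneg (hs i) (mul_nonneg (inv_nonneg.mpr (hα i).le)
      (mulVec_apply_nonneg hBnn (fun j => sub_nonneg.mpr (hp'p j)) i))
  have hzp' : (diagonal z - B) *ᵥ p' = lam := by
    rw [hp', mulVec_mulVec, mul_nonsing_inv _ (isUnit_det_diagonal_sub hz), one_mulVec]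
  refine ⟨⟨hs'0, fun i => (hp'p i).trans (hp1 i), hz, fun i => hp' ▸ le_rfl,
    fun i => congrFun hzs' i⟩, hs'0, ?_, gfun_eq_zero_iff.mpr (hzs' ▸ hzp')⟩
  exact hp' ▸ inv_mulVec_nonneg_of_mem_OmegaSet hBnn hB hlam hlam0 hz

end Problem

theorem statement8_general {N : ℕ}
    (B : Matrix (Fin N) (Fin N) ℝ) (hBnn : ∀ i j, 0 ≤ B i j) (hBirr : MatIrred B)
    (lam δ α : Fin N → ℝ)
    (hlam : ∀ i, 0 ≤ lam i) (hlam0 : lam ≠ 0)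
    (hδ : ∀ i, 0 < δ i) (hα : ∀ i, 0 < α i)
    (w : (Fin N → ℝ) → ℝ)
    (hwconv : ConvexOn ℝ Set.univ w)
    (hwdiff : Differentiable ℝ w)
    (c : Fin N → ℝ)
    (hgrad : ∀ s : Fin N → ℝ, 0 ≤ s → ∀ i,
      ∑ j, B j i * (α j)⁻¹ * fderiv ℝ w s (Pi.single j 1) ≤ c i)
    (sR pR zR : Fin N → ℝ)
    (hfeas : FeasPR1 B lam δ α sR pR zR)
    (hopt : ∀ s p z : Fin N → ℝ, FeasPR1 B lam δ α s p z →
      fobj w c sR pR ≤ fobj w c s p)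
    (ptil stil : Fin N → ℝ)
    (hptil : ptil = (Matrix.diagonal zR - B)⁻¹.mulVec lam)
    (hstil : stil = fun i => sR i + (α i)⁻¹ * B.mulVec (fun j => pR j - ptil j) i) :
    fobj w c stil ptil = fobj w c sR pR ∧
    fobj w c sR pR = sInf {v | ∃ s p, FeasP B lam δ α s p ∧ v = fobj w c s p} ∧
    FeasP B lam δ α stil ptil ∧
    (∀ s p : Fin N → ℝ, FeasP B lam δ α s p → fobj w c stil ptil ≤ fobj w c s p) ∧
    sInf {v | ∃ s p z, FeasPR1 B lam δ α s p z ∧ v = fobj w c s p} =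
      sInf {v | ∃ s p, FeasP B lam δ α s p ∧ v = fobj w c s p} := by
  obtain ⟨hfeasR, hfeasP⟩ := hfeas.shift hBnn hBirr hlam hlam0 hα hptil hstil
  have hval : fobj w c stil ptil = fobj w c sR pR :=
    le_antisymm (fobj_le_fobj_of_eq_add hwconv (hwdiff stil)
      (hgrad stil fun i => hfeasR.1 i) (fun i => hptil ▸ hfeas.2.2.2.1 i) hstil)
      (hopt _ _ _ hfeasR)
  have hleastP : IsLeast {v | ∃ s p, FeasP B lam δ α s p ∧ v = fobj w c s p} (fobj w c sR pR) :=
    ⟨⟨stil, ptil, hfeasP, hval.symm⟩, by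
      rintro _ ⟨s, p, h, rfl⟩
      exact hopt _ _ _ (h.feasPR1 hBnn hBirr hlam hlam0 hδ hα)⟩
  have hleastR : IsLeast {v | ∃ s p z, FeasPR1 B lam δ α s p z ∧ v = fobj w c s p}
      (fobj w c sR pR) :=
    ⟨⟨sR, pR, zR, hfeas, rfl⟩, by
      rintro _ ⟨s, p, z, h, rfl⟩
      exact hopt s p z h⟩
  exact ⟨hval, hleastP.csInf_eq.symm, hfeasP, fun s p h => hval ▸ hleastP.2 ⟨s, p, h, rfl⟩,
    by rw [hleastR.csInf_eq, hleastP.csInf_eq]⟩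

theorem statement8 {N : ℕ} (hN : 2 ≤ N)
    (B : Matrix (Fin N) (Fin N) ℝ) (hBnn : ∀ i j, 0 ≤ B i j) (hBirr : MatIrred B)
    (lam δ α : Fin N → ℝ)
    (hlam : ∀ i, 0 ≤ lam i) (hlam0 : lam ≠ 0)
    (hδ : ∀ i, 0 < δ i) (hα : ∀ i, 0 < α i)
    (w : (Fin N → ℝ) → ℝ) (hwcont : Continuous w)
    (hwconv : ConvexOn ℝ Set.univ w)
    (hwmono : ∀ s s' : Fin N → ℝ, s ≤ s' → s ≠ s' → w s < w s')
    (hwdiff : Differentiable ℝ w)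
    (c : Fin N → ℝ) (hc : ∀ i, 0 < c i)
    (hgrad : ∀ s : Fin N → ℝ, 0 ≤ s → ∀ i,
      ∑ j, B j i * (α j)⁻¹ * fderiv ℝ w s (Pi.single j 1) ≤ c i)
    (sR pR zR : Fin N → ℝ)
    (hfeas : FeasPR1 B lam δ α sR pR zR)
    (hopt : ∀ s p z : Fin N → ℝ, FeasPR1 B lam δ α s p z →
      fobj w c sR pR ≤ fobj w c s p)
    (ptil stil : Fin N → ℝ)
    (hptil : ptil = (Matrix.diagonal zR - B)⁻¹.mulVec lam)
    (hstil : stil = fun i => sR i + (α i)⁻¹ * B.mulVec (fun j => pR j - ptil j) i) :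
    fobj w c stil ptil = fobj w c sR pR ∧
    fobj w c sR pR = sInf {v | ∃ s p, FeasP B lam δ α s p ∧ v = fobj w c s p} ∧
    FeasP B lam δ α stil ptil ∧
    (∀ s p : Fin N → ℝ, FeasP B lam δ α s p → fobj w c stil ptil ≤ fobj w c s p) ∧
    sInf {v | ∃ s p z, FeasPR1 B lam δ α s p z ∧ v = fobj w c s p} =
      sInf {v | ∃ s p, FeasP B lam δ α s p ∧ v = fobj w c s p} :=
  statement8_general B hBnn hBirr lam δ α hlam hlam0 hδ hα w hwconv hwdiff c hgrad sR pR zR hfeas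
    hopt ptil stil hptil hstil
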